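/- Let r > 0, let P be the uniform distribution on the circle L = {(x₁,x₂) ∈ ℝ² : x₁² + x₂² = r²}, and let V_n denote the n-th conditional constrained quantization error for P with respect to the constraint S = L and the conditional set β = {(r,0)}. Then V_n → 0 as n → ∞, the conditional constrained quantization dimension exists and equals 1, i.e., lim_{n→∞} 2 log n / (−log V_n) = 1, and the conditional constrained quantization coefficient exists as a finite positive number: lim_{n→∞} n²·V_n = π²r²/3. -/

import Mathlib

open MeasureTheory Set Filter

/-- The uniform distribution on the circle of radius `r` centered at the origin:
the pushforward of the normalized Lebesgue measure on `[0, 2π)` under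
`θ ↦ (r cos θ, r sin θ)`. -/
noncomputable def uniformCircle (r : ℝ) : Measure (ℝ × ℝ) :=
  Measure.map (fun θ : ℝ => (r * Real.cos θ, r * Real.sin θ))
    ((ENNReal.ofReal (2 * Real.pi))⁻¹ • volume.restrict (Set.Ico 0 (2 * Real.pi)))

/-- The squared Euclidean distance on `ℝ²`. -/
noncomputable def sqDist (p q : ℝ × ℝ) : ℝ := (p.1 - q.1) ^ 2 + (p.2 - q.2) ^ 2

/-- The distortion error of a set `s` of points for the measure `P` on `ℝ²`. -/
noncomputable def distortion2 (P : Measure (ℝ × ℝ)) (s : Set (ℝ × ℝ)) : ℝ :=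
  ∫ x, sInf (sqDist x '' s) ∂P

/-- The `n`-th conditional constrained quantization error for `P` with respect to the
constraint `S` and the conditional set `β`. -/
noncomputable def condConstrQuantError2 (P : Measure (ℝ × ℝ)) (S β : Set (ℝ × ℝ)) (n : ℕ) :
    ℝ :=
  sInf { v : ℝ | ∃ α : Set (ℝ × ℝ),
    α ⊆ S ∧ α.Finite ∧ α.ncard ≤ n - β.ncard ∧ v = distortion2 P (α ∪ β) }

/-!
Parametrize the circle by `θ ↦ (r cos θ, r sin θ)`; the squared distance between the points of
angles `θ` and `a` is `2r²(1 - cos (θ - a))`. The `n` points of angles `2πk/n` (one of them is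
`(r, 0)`) each serve an arc of half-width `π/n`, with error `(2π)⁻¹ · 4r²(π - n sin (π/n))`.
Conversely, for any `m ≤ n` points on the circle, the angles whose squared distance to the nearest
point is below `2r²(1 - cos x)` have measure at most `2mx`; the layer-cake formula followed by the
substitution `t = 2r²(1 - cos x)` turns this into the same lower bound. So
`V_n = 2r²(1 - sin (π/n) / (π/n))`, and the limits follow from `sin x = x - x³/6 + O(x⁵)`.
-/

open Real Topology

noncomputable def circlePoint (r θ : ℝ) : ℝ × ℝ := (r * cos θ, r * sin θ)

lemma circlePoint_fst_sq_add_snd_sq (r θ : ℝ) :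
    (circlePoint r θ).1 ^ 2 + (circlePoint r θ).2 ^ 2 = r ^ 2 := by
  simp only [circlePoint]
  linear_combination r ^ 2 * sin_sq_add_cos_sq θ

lemma circlePoint_zero (r : ℝ) : circlePoint r 0 = (r, 0) := by
  simp [circlePoint]

lemma circlePoint_add_two_pi (r θ : ℝ) : circlePoint r (θ + 2 * π) = circlePoint r θ := by
  simp [circlePoint]

lemma continuous_circlePoint (r : ℝ) : Continuous (circlePoint r) := by
  unfold circlePoint; fun_prop

lemma sqDist_circlePoint (r θ a : ℝ) :
    sqDist (circlePoint r θ) (circlePoint r a) = 2 * r ^ 2 * (1 - cos (θ - a)) := by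
  simp only [sqDist, circlePoint, cos_sub]
  linear_combination r ^ 2 * (sin_sq_add_cos_sq θ + sin_sq_add_cos_sq a)

lemma exists_circlePoint_eq {r : ℝ} (hr : 0 ≤ r) {p : ℝ × ℝ} (hp : p.1 ^ 2 + p.2 ^ 2 = r ^ 2) :
    ∃ a, circlePoint r a = p := by
  set z : ℂ := ⟨p.1, p.2⟩
  have hz : ‖z‖ = r := by
    rw [Complex.norm_def, Complex.normSq_mk, ← sqrt_sq hr, ← hp]
    ring_nf
  refine ⟨Complex.arg z, ?_⟩
  simp only [circlePoint, ← hz, Complex.norm_mul_cos_arg, Complex.norm_mul_sin_arg]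
  rfl

lemma sInf_sqDist_nonneg (x : ℝ × ℝ) (T : Set (ℝ × ℝ)) : 0 ≤ sInf (sqDist x '' T) :=
  Real.sInf_nonneg (by rintro _ ⟨p, -, rfl⟩; unfold sqDist; positivity)

lemma sInf_sqDist_le {T : Set (ℝ × ℝ)} (hT : T.Finite) (x : ℝ × ℝ) {p : ℝ × ℝ} (hp : p ∈ T) :
    sInf (sqDist x '' T) ≤ sqDist x p :=
  csInf_le (hT.image _).bddBelow (mem_image_of_mem _ hp)

lemma exists_mem_sqDist_eq_sInf {T : Set (ℝ × ℝ)} (hT : T.Finite) (hne : T.Nonempty)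
    (x : ℝ × ℝ) : ∃ p ∈ T, sqDist x p = sInf (sqDist x '' T) :=
  (hne.image _).csInf_mem (hT.image _)

lemma continuous_sInf_sqDist {T : Set (ℝ × ℝ)} (hT : T.Finite) (hne : T.Nonempty) :
    Continuous fun x => sInf (sqDist x '' T) := by
  have hne' : hT.toFinset.Nonempty := hT.toFinset_nonempty.mpr hne
  have key : ∀ x, sInf (sqDist x '' T) = hT.toFinset.inf' hne' (sqDist x) := fun x => by
    rw [Finset.inf'_eq_csInf_image, hT.coe_toFinset]
  simp only [key]
  exact Continuous.finset_inf'_apply hne' fun p _ => by unfold sqDist; fun_prop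

lemma distortion2_uniformCircle (r : ℝ) {T : Set (ℝ × ℝ)} (hT : T.Finite) (hne : T.Nonempty) :
    distortion2 (uniformCircle r) T =
      (2 * π)⁻¹ * ∫ θ in Ico 0 (2 * π), sInf (sqDist (circlePoint r θ) '' T) := by
  change ∫ x, _ ∂Measure.map (circlePoint r) _ = _
  rw [integral_map (continuous_circlePoint r).aemeasurable
    (continuous_sInf_sqDist hT hne).aestronglyMeasurable, integral_smul_measure,
    ENNReal.toReal_inv, ENNReal.toReal_ofReal two_pi_pos.le]
  rfl

lemma periodic_sInf_sqDist_circlePoint (r : ℝ) (T : Set (ℝ × ℝ)) :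
    Function.Periodic (fun θ => sInf (sqDist (circlePoint r θ) '' T)) (2 * π) := fun θ => by
  simp only [circlePoint_add_two_pi]

lemma integral_Ico_eq_intervalIntegral {f : ℝ → ℝ} {a b : ℝ} (hab : a ≤ b) :
    ∫ θ in Ico a b, f θ = ∫ θ in a..b, f θ := by
  rw [intervalIntegral.integral_of_le hab, integral_Ico_eq_integral_Ioc]

lemma integral_sqDist_circlePoint_centered (r c h : ℝ) :
    ∫ θ in (c - h)..(c + h), sqDist (circlePoint r θ) (circlePoint r c) =
      4 * r ^ 2 * (h - sin h) := by
  simp only [sqDist_circlePoint]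
  rw [intervalIntegral.integral_comp_sub_right (fun x => 2 * r ^ 2 * (1 - cos x)),
    intervalIntegral.integral_const_mul, intervalIntegral.integral_sub intervalIntegrable_const
      (continuous_cos.intervalIntegrable _ _), integral_cos]
  simp only [sub_sub_cancel_left, sin_neg, intervalIntegral.integral_const, add_sub_cancel_left,
    sub_neg_eq_add, smul_eq_mul, mul_one]
  ring

lemma integral_sInf_sqDist_circlePoint_le {r : ℝ} {n : ℕ} (hn : n ≠ 0) {T : Set (ℝ × ℝ)}
    (hT : T.Finite) (hreg : ∀ k < n, circlePoint r (2 * π * k / n) ∈ T) :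
    ∫ θ in Ico 0 (2 * π), sInf (sqDist (circlePoint r θ) '' T) ≤
      4 * r ^ 2 * (π - n * sin (π / n)) := by
  set g := fun θ => sInf (sqDist (circlePoint r θ) '' T)
  have hne : T.Nonempty := ⟨_, hreg 0 (Nat.pos_of_ne_zero hn)⟩
  have hg : Continuous g := (continuous_sInf_sqDist hT hne).comp (continuous_circlePoint r)
  set h : ℝ := π / n
  -- Shifting the period by `-h` makes `2πk/n` the midpoint of the `k`-th piece.
  set a : ℕ → ℝ := fun k => 2 * π * k / n - h
  have hnR : (n : ℝ) ≠ 0 := by positivity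
  have ha0 : a 0 = -h := by simp [a]
  have han : a n = -h + 2 * π := by
    simp only [a]
    rw [mul_div_assoc, div_self hnR]
    ring
  have hpiece : ∀ k < n, ∫ θ in a k..a (k + 1), g θ ≤ 4 * r ^ 2 * (h - sin h) := by
    intro k hk
    set c : ℝ := 2 * π * k / n
    have hbounds : a k = c - h ∧ a (k + 1) = c + h :=
      ⟨rfl, by simp only [a, c, h]; push_cast; ring⟩
    rw [← integral_sqDist_circlePoint_centered r c h, hbounds.1, hbounds.2]
    have hh : 0 ≤ h := by positivity
    refine intervalIntegral.integral_mono_on (by linarith) (hg.intervalIntegrable _ _)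
      (Continuous.intervalIntegrable (by unfold sqDist circlePoint; fun_prop) _ _)
      fun θ _ => sInf_sqDist_le hT _ (hreg k hk)
  calc ∫ θ in Ico 0 (2 * π), g θ
      = ∫ θ in a 0..a n, g θ := by
        rw [integral_Ico_eq_intervalIntegral two_pi_pos.le, ha0, han]
        simpa using (periodic_sInf_sqDist_circlePoint r T).intervalIntegral_add_eq 0 (-h)
    _ = ∑ k ∈ Finset.range n, ∫ θ in a k..a (k + 1), g θ :=
        (intervalIntegral.sum_integral_adjacent_intervals fun k _ =>
          hg.intervalIntegrable _ _).symm
    _ ≤ ∑ k ∈ Finset.range n, 4 * r ^ 2 * (h - sin h) :=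
        Finset.sum_le_sum fun k hk => hpiece k (Finset.mem_range.mp hk)
    _ = 4 * r ^ 2 * (π - n * sin (π / n)) := by
        simp only [Finset.sum_const, Finset.card_range, nsmul_eq_mul, h]
        field_simp

lemma measureReal_cos_le_cos_sub_le {a s : ℝ} (hs0 : 0 ≤ s) :
    (volume.restrict (Ico 0 (2 * π))).real {θ | cos s ≤ cos (θ - a)} ≤ 2 * s := by
  set A := {θ : ℝ | cos s ≤ cos (θ - a)}
  have hA : MeasurableSet A := measurableSet_le measurable_const (by fun_prop)
  have hper : Function.Periodic (A.indicator (1 : ℝ → ℝ)) (2 * π) := fun θ => by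
    simp only [A, indicator, mem_ofPred_eq, Pi.one_apply, add_sub_right_comm, cos_add_two_pi]
  have harc : A ∩ Ioc (a - π) (a + π) ⊆ Icc (a - s) (a + s) := by
    rintro θ ⟨hθA, hθ₁, hθ₂⟩
    have : |θ - a| ≤ s := by
      by_contra! hlt
      have := cos_lt_cos_of_nonneg_of_le_pi hs0 (abs_le.mpr ⟨by linarith, by linarith⟩) hlt
      exact (cos_abs (θ - a) ▸ this).not_ge hθA
    constructor <;> linarith [abs_le.mp this]
  -- Periodicity moves the window `[0, 2π)` to `(a - π, a + π]`, where `A` is an arc.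
  calc (volume.restrict (Ico 0 (2 * π))).real A
      = ∫ θ in (0 : ℝ)..0 + 2 * π, A.indicator 1 θ := by
        rw [← integral_indicator_one hA, zero_add,
          ← integral_Ico_eq_intervalIntegral two_pi_pos.le]
    _ = ∫ θ in (a - π)..(a - π) + 2 * π, A.indicator 1 θ := hper.intervalIntegral_add_eq _ _
    _ = volume.real (A ∩ Ioc (a - π) (a + π)) := by
        rw [intervalIntegral.integral_of_le (by linarith [pi_pos]), integral_indicator_one hA,
          measureReal_restrict_apply hA]
        ring_nf
    _ ≤ volume.real (Icc (a - s) (a + s)) := measureReal_mono harc measure_Icc_lt_top.ne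
    _ = 2 * s := by rw [Real.volume_real_Icc, max_eq_left (by linarith)]; ring

lemma measureReal_sInf_sqDist_lt_le {r s : ℝ} (hs0 : 0 ≤ s) {T : Set (ℝ × ℝ)}
    (hT : T.Finite) (hne : T.Nonempty) (hTc : T ⊆ range (circlePoint r)) :
    (volume.restrict (Ico 0 (2 * π))).real
        {θ | sInf (sqDist (circlePoint r θ) '' T) < 2 * r ^ 2 * (1 - cos s)} ≤
      2 * T.ncard * s := by
  choose! angle hangle using fun p (hp : p ∈ T) => hTc hp
  have hcover : {θ | sInf (sqDist (circlePoint r θ) '' T) < 2 * r ^ 2 * (1 - cos s)} ⊆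
      ⋃ p ∈ hT.toFinset, {θ | cos s ≤ cos (θ - angle p)} := by
    intro θ hθ
    obtain ⟨p, hp, hpθ⟩ := exists_mem_sqDist_eq_sInf hT hne (circlePoint r θ)
    refine mem_biUnion (hT.mem_toFinset.mpr hp) ?_
    rw [mem_ofPred_eq, ← hpθ, ← hangle p hp, sqDist_circlePoint] at hθ
    rw [mem_ofPred_eq]
    by_contra! hlt
    nlinarith [sq_nonneg r]
  calc _ ≤ ∑ p ∈ hT.toFinset, (volume.restrict (Ico 0 (2 * π))).real
          {θ | cos s ≤ cos (θ - angle p)} :=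
        (measureReal_mono hcover (measure_ne_top _ _)).trans (measureReal_biUnion_finset_le _ _)
    _ ≤ ∑ p ∈ hT.toFinset, 2 * s :=
        Finset.sum_le_sum fun p _ => measureReal_cos_le_cos_sub_le hs0
    _ = 2 * T.ncard * s := by
        rw [Finset.sum_const, nsmul_eq_mul, ← Set.ncard_eq_toFinset_card T hT]; ring

lemma two_pi_sub_le_measureReal_le_sInf_sqDist {r s : ℝ} (hs0 : 0 ≤ s) {T : Set (ℝ × ℝ)}
    (hT : T.Finite) (hne : T.Nonempty) (hTc : T ⊆ range (circlePoint r)) :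
    2 * π - 2 * T.ncard * s ≤ (volume.restrict (Ico 0 (2 * π))).real
        {θ | 2 * r ^ 2 * (1 - cos s) ≤ sInf (sqDist (circlePoint r θ) '' T)} := by
  have hmeas : MeasurableSet
      {θ | 2 * r ^ 2 * (1 - cos s) ≤ sInf (sqDist (circlePoint r θ) '' T)} :=
    measurableSet_le measurable_const
      ((continuous_sInf_sqDist hT hne).comp (continuous_circlePoint r)).measurable
  have hcompl := measureReal_compl (μ := volume.restrict (Ico 0 (2 * π))) hmeas
  rw [measureReal_restrict_apply_univ, Real.volume_real_Ico_of_le two_pi_pos.le, sub_zero] at hcompl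
  have hsub := measureReal_sInf_sqDist_lt_le hs0 hT hne hTc
  simp only [compl_ofPred, not_le] at hcompl
  linarith

lemma integral_two_pi_sub_mul_sin {n : ℕ} (hn : n ≠ 0) (r : ℝ) :
    ∫ x in (0 : ℝ)..π / n, (2 * π - 2 * n * x) * (2 * r ^ 2 * sin x) =
      4 * r ^ 2 * (π - n * sin (π / n)) := by
  have hderiv : ∀ x, HasDerivAt
      (fun x => 2 * r ^ 2 * (-(2 * π) * cos x - 2 * n * (sin x - x * cos x)))
      ((2 * π - 2 * n * x) * (2 * r ^ 2 * sin x)) x := fun x => by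
    refine ((((hasDerivAt_cos x).const_mul (-(2 * π))).sub (((hasDerivAt_sin x).sub
      ((hasDerivAt_id' x).mul (hasDerivAt_cos x))).const_mul (2 * (n : ℝ)))).const_mul
      (2 * r ^ 2)).congr_deriv ?_
    ring
  rw [intervalIntegral.integral_eq_sub_of_hasDerivAt (fun x _ => hderiv x)
    (Continuous.intervalIntegrable (by fun_prop) _ _)]
  have hnu : (n : ℝ) * (π / n) = π := mul_div_cancel₀ π (Nat.cast_ne_zero.mpr hn)
  simp only [cos_zero, sin_zero]
  linear_combination (4 * r ^ 2 * cos (π / n)) * hnu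

lemma integral_sInf_sqDist_circlePoint_eq {r : ℝ} {T : Set (ℝ × ℝ)} (hT : T.Finite)
    (hne : T.Nonempty) (hTc : T ⊆ range (circlePoint r)) :
    ∫ θ in Ico 0 (2 * π), sInf (sqDist (circlePoint r θ) '' T) =
      ∫ t in (0 : ℝ)..4 * r ^ 2, (volume.restrict (Ico 0 (2 * π))).real
        {θ | t ≤ sInf (sqDist (circlePoint r θ) '' T)} := by
  have hg : Continuous fun θ => sInf (sqDist (circlePoint r θ) '' T) :=
    (continuous_sInf_sqDist hT hne).comp (continuous_circlePoint r)
  have hbound : ∀ θ, sInf (sqDist (circlePoint r θ) '' T) ≤ 4 * r ^ 2 := fun θ => by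
    obtain ⟨p, hp⟩ := hne
    obtain ⟨a, rfl⟩ := hTc hp
    have := sInf_sqDist_le hT (circlePoint r θ) hp
    rw [sqDist_circlePoint] at this
    nlinarith [neg_one_le_cos (θ - a), sq_nonneg r]
  rw [intervalIntegral.integral_of_le (by positivity),
    (hg.integrableOn_Icc.mono_set Ico_subset_Icc_self).integral_eq_integral_Ioc_meas_le
      (Eventually.of_forall fun θ => sInf_sqDist_nonneg _ _) (Eventually.of_forall hbound)]

lemma le_integral_sInf_sqDist_circlePoint {r : ℝ} {n : ℕ} (hn : n ≠ 0) {T : Set (ℝ × ℝ)}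
    (hT : T.Finite) (hne : T.Nonempty) (hTc : T ⊆ range (circlePoint r)) (hcard : T.ncard ≤ n) :
    4 * r ^ 2 * (π - n * sin (π / n)) ≤
      ∫ θ in Ico 0 (2 * π), sInf (sqDist (circlePoint r θ) '' T) := by
  set g := fun θ => sInf (sqDist (circlePoint r θ) '' T)
  set μ := volume.restrict (Ico 0 (2 * π))
  set lam := fun t => μ.real {θ | t ≤ g θ}
  set φ := fun x => 2 * r ^ 2 * (1 - cos x)
  have hnR : (1 : ℝ) ≤ n := by exact_mod_cast Nat.one_le_iff_ne_zero.mpr hn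
  have hu : 0 ≤ π / n ∧ π / n ≤ π := ⟨by positivity, div_le_self pi_pos.le hnR⟩
  have hanti : Antitone lam := fun t₁ t₂ h =>
    measureReal_mono (fun θ hθ => le_trans h hθ) (measure_ne_top _ _)
  have hlam : ∀ x, 0 ≤ x → 2 * π - 2 * n * x ≤ lam (φ x) := fun x hx => by
    refine le_trans ?_ (two_pi_sub_le_measureReal_le_sInf_sqDist hx hT hne hTc)
    have : (T.ncard : ℝ) ≤ n := by exact_mod_cast hcard
    nlinarith
  have hφ : ∀ x, HasDerivAt φ (2 * r ^ 2 * sin x) x := fun x => by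
    simpa using ((hasDerivAt_cos x).const_sub 1).const_mul (2 * r ^ 2)
  have hsin : ∀ x ∈ Ioo (min 0 (π / n)) (max 0 (π / n)), 0 ≤ 2 * r ^ 2 * sin x := by
    intro x hx
    rw [min_eq_left hu.1, max_eq_right hu.1] at hx
    have := sin_nonneg_of_nonneg_of_le_pi hx.1.le (hx.2.le.trans hu.2)
    positivity
  calc 4 * r ^ 2 * (π - n * sin (π / n))
      = ∫ x in (0 : ℝ)..π / n, (2 * π - 2 * n * x) * (2 * r ^ 2 * sin x) :=
        (integral_two_pi_sub_mul_sin hn r).symm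
    _ ≤ ∫ x in (0 : ℝ)..π / n, (lam ∘ φ) x * (2 * r ^ 2 * sin x) := by
        refine intervalIntegral.integral_mono_on hu.1
          (Continuous.intervalIntegrable (by fun_prop) _ _)
          ((intervalIntegral.integrable_comp_mul_deriv_iff_of_deriv_nonneg
            (Continuous.continuousOn (by fun_prop)) (fun x _ => hφ x) hsin).mpr
            hanti.intervalIntegrable) fun x hx => ?_
        exact mul_le_mul_of_nonneg_right (hlam x hx.1)
          (mul_nonneg (by positivity) (sin_nonneg_of_nonneg_of_le_pi hx.1 (hx.2.trans hu.2)))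
    _ = ∫ t in φ 0..φ (π / n), lam t :=
        intervalIntegral.integral_comp_mul_deriv_of_deriv_nonneg
          (Continuous.continuousOn (by fun_prop)) (fun x _ => hφ x) hsin
    _ ≤ ∫ t in (0 : ℝ)..4 * r ^ 2, lam t := by
        refine intervalIntegral.integral_mono_interval (by simp [φ]) ?_ ?_
          (Eventually.of_forall fun t => measureReal_nonneg) hanti.intervalIntegrable
        · simp only [φ, cos_zero, sub_self, mul_zero]
          nlinarith [cos_le_one (π / n), sq_nonneg r]
        · nlinarith [neg_one_le_cos (π / n), sq_nonneg r]
    _ = ∫ θ in Ico 0 (2 * π), g θ := (integral_sInf_sqDist_circlePoint_eq hT hne hTc).symm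

noncomputable def circleQuantError (r : ℝ) (n : ℕ) : ℝ :=
  (2 * π)⁻¹ * (4 * r ^ 2 * (π - n * sin (π / n)))

lemma range_circlePoint {r : ℝ} (hr : 0 ≤ r) :
    range (circlePoint r) = {p : ℝ × ℝ | p.1 ^ 2 + p.2 ^ 2 = r ^ 2} :=
  Subset.antisymm (range_subset_iff.mpr (circlePoint_fst_sq_add_snd_sq r))
    fun _ hp => exists_circlePoint_eq hr hp

lemma le_distortion2_uniformCircle {r : ℝ} (hr : 0 ≤ r) {n : ℕ} (hn : n ≠ 0) {α : Set (ℝ × ℝ)}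
    (hαS : α ⊆ {p : ℝ × ℝ | p.1 ^ 2 + p.2 ^ 2 = r ^ 2}) (hα : α.Finite) (hcard : α.ncard ≤ n - 1) :
    circleQuantError r n ≤
      distortion2 (uniformCircle r) (α ∪ {(r, 0)}) := by
  have hT : (α ∪ {(r, 0)}).Finite := hα.union (finite_singleton _)
  have hne : (α ∪ {(r, 0)}).Nonempty := ⟨_, Or.inr rfl⟩
  have hTc : α ∪ {(r, 0)} ⊆ range (circlePoint r) := by
    rw [range_circlePoint hr]
    exact union_subset hαS (singleton_subset_iff.mpr (by simp))
  have hTcard : (α ∪ {(r, 0)}).ncard ≤ n :=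
    (ncard_union_le _ _).trans (by rw [ncard_singleton]; omega)
  rw [distortion2_uniformCircle r hT hne, circleQuantError]
  gcongr
  exact le_integral_sInf_sqDist_circlePoint hn hT hne hTc hTcard

lemma exists_distortion2_uniformCircle_le (r : ℝ) {n : ℕ} (hn : n ≠ 0) :
    ∃ α ⊆ {p : ℝ × ℝ | p.1 ^ 2 + p.2 ^ 2 = r ^ 2}, α.Finite ∧ α.ncard ≤ n - 1 ∧
      distortion2 (uniformCircle r) (α ∪ {(r, 0)}) ≤
        circleQuantError r n := by
  set α : Finset (ℝ × ℝ) :=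
    (Finset.range (n - 1)).image fun k => circlePoint r (2 * π * (k + 1 : ℕ) / n)
  have hT : ((α : Set (ℝ × ℝ)) ∪ {(r, 0)}).Finite := α.finite_toSet.union (finite_singleton _)
  have hreg : ∀ k < n, circlePoint r (2 * π * k / n) ∈ (α : Set (ℝ × ℝ)) ∪ {(r, 0)} := by
    rintro (_ | k) hk
    · simp [circlePoint_zero]
    · left
      simp only [α, Finset.coe_image, Finset.coe_range]
      exact mem_image_of_mem _ (by simp only [mem_Iio]; omega)
  refine ⟨α, ?_, α.finite_toSet, ?_, ?_⟩
  · simp only [α, Finset.coe_image, image_subset_iff]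
    exact fun k _ => circlePoint_fst_sq_add_snd_sq r _
  · rw [ncard_coe_finset]
    exact Finset.card_image_le.trans (Finset.card_range _).le
  · rw [distortion2_uniformCircle r hT ⟨_, Or.inr rfl⟩, circleQuantError]
    gcongr
    exact integral_sInf_sqDist_circlePoint_le hn hT hreg

lemma condConstrQuantError2_uniformCircle {r : ℝ} (hr : 0 ≤ r) {n : ℕ} (hn : n ≠ 0) :
    condConstrQuantError2 (uniformCircle r) {p : ℝ × ℝ | p.1 ^ 2 + p.2 ^ 2 = r ^ 2} {(r, 0)} n =
      circleQuantError r n := by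
  obtain ⟨α, hαS, hα, hcard, hle⟩ := exists_distortion2_uniformCircle_le r hn
  have hcard' : α.ncard ≤ n - ({(r, 0)} : Set (ℝ × ℝ)).ncard := by rwa [ncard_singleton]
  refine csInf_eq_of_forall_ge_of_forall_gt_exists_lt ⟨_, α, hαS, hα, hcard', rfl⟩ ?_
    fun w hw => ⟨_, ⟨α, hαS, hα, hcard', rfl⟩, hle.trans_lt hw⟩
  rintro _ ⟨β, hβS, hβ, hβcard, rfl⟩
  exact le_distortion2_uniformCircle hr hn hβS hβ (by rwa [ncard_singleton] at hβcard)

lemma tendsto_sub_sin_div_pow_three :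
    Tendsto (fun x => (x - sin x) / x ^ 3) (𝓝[>] 0) (𝓝 (1 / 6)) := by
  rw [← tendsto_sub_nhds_zero_iff]
  have hsq : Tendsto (fun x : ℝ => x ^ 2 / 100) (𝓝[>] 0) (𝓝 0) := by
    simpa using ((continuous_pow 2).div_const (100 : ℝ)).tendsto' 0 0 (by simp)
      |>.mono_left nhdsWithin_le_nhds
  refine squeeze_zero_norm' ?_ hsq
  filter_upwards [Ioc_mem_nhdsGT zero_lt_one] with x ⟨hx0, hx1⟩
  have hx3 : 0 < x ^ 3 := by positivity
  have hbound := sin_bound (x := x) (by rwa [abs_of_pos hx0])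
  rw [abs_of_pos hx0] at hbound
  rw [Real.norm_eq_abs, show (x - sin x) / x ^ 3 - 1 / 6 = -(sin x - (x - x ^ 3 / 6)) / x ^ 3 by
    field_simp; ring, abs_div, abs_neg, abs_of_pos hx3, div_le_iff₀ hx3]
  calc _ ≤ x ^ 5 / 100 := hbound
    _ = _ := by ring

lemma tendsto_sq_mul_circleQuantError {r : ℝ} :
    Tendsto (fun n : ℕ => (n : ℝ) ^ 2 * circleQuantError r n)
      atTop (𝓝 (π ^ 2 * r ^ 2 / 3)) := by
  have hx : Tendsto (fun n : ℕ => π / n) atTop (𝓝[>] 0) :=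
    tendsto_nhdsWithin_iff.mpr ⟨tendsto_const_div_atTop_nhds_zero_nat π,
      (eventually_ne_atTop 0).mono fun n hn => div_pos pi_pos (by positivity)⟩
  have := (tendsto_sub_sin_div_pow_three.comp hx).const_mul (2 * r ^ 2 * π ^ 2)
  rw [show 2 * r ^ 2 * π ^ 2 * (1 / 6) = π ^ 2 * r ^ 2 / 3 by ring] at this
  refine this.congr' ?_
  filter_upwards [eventually_ne_atTop 0] with n hn
  simp only [Function.comp, circleQuantError]
  field_simp
  ring

lemma tendsto_zero_of_tendsto_sq_mul {V : ℕ → ℝ} {c : ℝ}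
    (h : Tendsto (fun n : ℕ => (n : ℝ) ^ 2 * V n) atTop (𝓝 c)) : Tendsto V atTop (𝓝 0) := by
  have := (tendsto_inv_atTop_nhds_zero_nat.pow 2).mul h
  rw [zero_pow two_ne_zero, zero_mul] at this
  refine this.congr' ?_
  filter_upwards [eventually_ne_atTop 0] with n hn
  field_simp

lemma tendsto_two_mul_log_div_neg_log_of_tendsto_sq_mul {V : ℕ → ℝ} {c : ℝ} (hc : 0 < c)
    (h : Tendsto (fun n : ℕ => (n : ℝ) ^ 2 * V n) atTop (𝓝 c)) :
    Tendsto (fun n : ℕ => 2 * log n / (-log (V n))) atTop (𝓝 1) := by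
  have hlog : Tendsto (fun n : ℕ => 2 * log n) atTop atTop :=
    (tendsto_log_atTop.comp tendsto_natCast_atTop_atTop).const_mul_atTop two_pos
  have := (tendsto_const_nhds.sub ((h.log hc.ne').mul hlog.inv_tendsto_atTop)).inv₀
    (by simp : (1 : ℝ) - log c * 0 ≠ 0)
  rw [mul_zero, sub_zero, inv_one] at this
  refine this.congr' ?_
  filter_upwards [h.eventually (eventually_gt_nhds hc), eventually_gt_atTop 1] with n hV hn
  have hVpos : 0 < V n := pos_of_mul_pos_right hV (by positivity)
  have hlogn : 0 < log n := log_pos (by exact_mod_cast hn)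
  rw [Pi.inv_apply, log_mul (by positivity) hVpos.ne', log_pow, Nat.cast_ofNat,
    show 1 - (2 * log n + log (V n)) * (2 * log n)⁻¹ = -log (V n) / (2 * log n) by
      field_simp; ring, inv_div]

/-- Theorem 3.5: for the uniform distribution on the circle of radius `r`, with constraint the
circle itself and conditional set `{(r, 0)}`, the conditional constrained quantization errors
`V_n` tend to `0`, the conditional constrained quantization dimension equals `1`, and the
conditional constrained quantization coefficient equals `π²r²/3`. -/
theorem stmt9 (r : ℝ) (hr : 0 < r) (V : ℕ → ℝ)
    (hV : ∀ n : ℕ, V n = condConstrQuantError2 (uniformCircle r)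
        {p : ℝ × ℝ | p.1 ^ 2 + p.2 ^ 2 = r ^ 2} {(r, 0)} n) :
    Tendsto V atTop (nhds 0)
    ∧ Tendsto (fun n : ℕ => 2 * Real.log n / (-Real.log (V n))) atTop (nhds 1)
    ∧ Tendsto (fun n : ℕ => (n : ℝ) ^ 2 * V n) atTop (nhds (Real.pi ^ 2 * r ^ 2 / 3)) := by
  have hcoef : Tendsto (fun n : ℕ => (n : ℝ) ^ 2 * V n) atTop (𝓝 (π ^ 2 * r ^ 2 / 3)) := by
    refine tendsto_sq_mul_circleQuantError.congr' ?_
    filter_upwards [eventually_ne_atTop 0] with n hn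
    rw [hV n, condConstrQuantError2_uniformCircle hr.le hn]
  exact ⟨tendsto_zero_of_tendsto_sq_mul hcoef,
    tendsto_two_mul_log_div_neg_log_of_tendsto_sq_mul (by positivity) hcoef, hcoef⟩
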